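/- arXiv:1410.2209 — 5 statements merged into one kernel-verified Lean document; each statement's English description precedes it below -/
import Mathlib

section
/- Let T₁,...,T_k be multilinear polynomials in x₁,...,x_n with non-negative coefficients, and for each i define the bivariate polynomial Q_i(x,y) = Σ_{m ∈ T_i} y^{deg(m)} x^{b(F(m))}, where F(m) is the set of variables occurring in monomial m and b(F(m)) is the integer with binary characteristic vector of F(m). Then the product T₁···T_k contains the monomial x₁x₂···x_n (with positive coefficient) if and only if Q₁···Q_k contains the monomial y^n x^{2^n − 1} (with positive coefficient). -/
/-!
With non-negative coefficients nothing cancels, so `∏ Tᵢ` contains `x₁⋯xₙ` iff one can choose a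
monomial of each `Tᵢ` whose exponents add up to `(1, …, 1)`, and likewise for `∏ Qᵢ`. For
multilinear monomials the encoded exponents add up to `(∑ c_v 2^v, ∑ c_v)`, where `c_v` counts the
chosen monomials containing `x_v`. Finally `∑ c_v 2^v = 2ⁿ - 1` together with `∑ c_v = n` forces
every `c_v = 1`: the lowest digit `c₀` is odd, and a surplus carried to the next digit would push
`∑ c_v` above `n`.
-/

open MvPolynomial Finset

theorem MvPolynomial.coeff_prod_ne_zero_iff {R σ ι : Type*} [CommSemiring R] [Nontrivial R]
    [NoZeroDivisors R] [Subsingleton (AddUnits R)] [Fintype ι]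
    (P : ι → MvPolynomial σ R) (d : σ →₀ ℕ) :
    (∏ i, P i).coeff d ≠ 0 ↔ ∃ f : ι → σ →₀ ℕ, (∀ i, f i ∈ (P i).support) ∧ ∑ i, f i = d := by
  classical
  rw [← coeff_coe, ← coeToMvPowerSeries.ringHom_apply, map_prod, MvPowerSeries.coeff_prod, Ne,
    sum_eq_zero_iff]
  push Not
  refine Finsupp.equivFunOnFinite.exists_congr_left.trans ?_
  simp [prod_ne_zero_iff, and_comm]

theorem MvPolynomial.mem_support_sum_monomial_iff {R σ τ : Type*} [CommSemiring R]
    [Subsingleton (AddUnits R)] (p : MvPolynomial σ R) (φ : (σ →₀ ℕ) → τ →₀ ℕ) (e : τ →₀ ℕ) :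
    e ∈ (∑ d ∈ p.support, monomial (φ d) (p.coeff d)).support ↔ ∃ d ∈ p.support, φ d = e := by
  classical
  rw [mem_support_iff, coeff_sum, Ne, sum_eq_zero_iff]
  push Not
  simp only [coeff_monomial, ite_ne_right_iff]
  exact exists_congr fun d => and_congr_right fun hd => (and_iff_left (mem_support_iff.1 hd))

theorem Finsupp.single_zero_add_single_one_inj {M : Type*} [AddZeroClass M] {a b a' b' : M} :
    single (0 : Fin 2) a + single 1 b = single 0 a' + single 1 b' ↔ a = a' ∧ b = b' := by
  simp [Finsupp.ext_iff, Fin.forall_fin_two]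

theorem Finsupp.eq_sum_single_one_iff {n : ℕ} (c : Fin n →₀ ℕ) :
    c = ∑ v, single v 1 ↔ ∀ v, c v = 1 := by
  simp [Finsupp.ext_iff, Finsupp.finsetSum_apply, Finsupp.single_apply]

theorem eq_one_of_sum_mul_two_pow_add_one_eq {n : ℕ} {c : Fin n → ℕ}
    (hw : ∑ v, c v * 2 ^ (v : ℕ) + 1 = 2 ^ n) (hs : ∑ v, c v ≤ n) (v : Fin n) : c v = 1 := by
  induction n with
  | zero => exact v.elim0
  | succ n ih =>
    rcases n with _ | n
    · rw [Fin.fin_one_eq_zero v]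
      rw [Fin.sum_univ_one] at hw hs
      rw [Fin.val_zero, pow_zero, mul_one] at hw
      omega
    rw [Fin.sum_univ_succ] at hw hs
    have hshift : ∑ i : Fin (n + 1), c i.succ * 2 ^ ((i.succ : Fin (n + 2)) : ℕ)
        = 2 * ∑ i : Fin (n + 1), c i.succ * 2 ^ (i : ℕ) := by
      rw [mul_sum]; exact sum_congr rfl fun i _ => by rw [Fin.val_succ, pow_succ]; ring
    rw [hshift, Fin.val_zero, pow_zero, mul_one, pow_succ] at hw
    obtain ⟨a, ha⟩ : ∃ a, c 0 = 2 * a + 1 := ⟨c 0 / 2, by omega⟩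
    -- carry the surplus `2 * a` of the lowest digit into the next one
    set c' : Fin (n + 1) → ℕ := fun i => c i.succ + if i = 0 then a else 0 with hc'
    have hsum' : ∑ i, c' i = ∑ i : Fin (n + 1), c i.succ + a := by
      simp [hc', sum_add_distrib]
    have hw' : ∑ i, c' i * 2 ^ (i : ℕ) + 1 = 2 ^ (n + 1) := by
      simp only [hc', add_mul, ite_mul, zero_mul, sum_add_distrib, sum_ite_eq', mem_univ,
        if_true, Fin.val_zero, pow_zero, mul_one]
      omega
    have hc'_one := ih hw' (by omega)
    have ha0 : a = 0 := by
      have : ∑ i, c' i = n + 1 := by simp [hc'_one]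
      omega
    refine Fin.cases (by omega) (fun i => ?_) v
    simpa [hc', ha0] using hc'_one i

theorem sum_mul_two_pow_eq_and_sum_eq_iff {n : ℕ} (c : Fin n → ℕ) :
    (∑ v, c v * 2 ^ (v : ℕ) = 2 ^ n - 1 ∧ ∑ v, c v = n) ↔ ∀ v, c v = 1 := by
  have hgeom : ∑ v : Fin n, 2 ^ (v : ℕ) = 2 ^ n - 1 := by
    rw [Fin.sum_univ_eq_sum_range (2 ^ ·)]
    simp [Nat.geomSum_eq le_rfl]
  refine ⟨fun ⟨hw, hs⟩ => eq_one_of_sum_mul_two_pow_add_one_eq ?_ hs.le, fun h => by simp [h, hgeom]⟩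
  have := Nat.one_le_two_pow (n := n)
  omega

/-- The exponent of `x ^ b(F(d)) * y ^ deg d` in the variables `x = X 0`, `y = X 1`; variables
are indexed from `0`, so `b(F(d)) = ∑_{v ∈ F(d)} 2 ^ v`. -/
noncomputable def encodeMonomial {n : ℕ} (d : Fin n →₀ ℕ) : Fin 2 →₀ ℕ :=
  Finsupp.single 0 (∑ v ∈ d.support, 2 ^ (v : ℕ)) + Finsupp.single 1 (d.sum fun _ e => e)

theorem encodeMonomial_of_le_one {n : ℕ} {d : Fin n →₀ ℕ} (hd : ∀ v, d v ≤ 1) :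
    encodeMonomial d =
      Finsupp.single 0 (∑ v, d v * 2 ^ (v : ℕ)) + Finsupp.single 1 (∑ v, d v) := by
  have hbits : ∑ v ∈ d.support, 2 ^ (v : ℕ) = ∑ v, d v * 2 ^ (v : ℕ) := by
    rw [← sum_subset d.support.subset_univ fun v _ hv => by simp [Finsupp.notMem_support_iff.1 hv]]
    exact sum_congr rfl fun v hv => by
      rw [show d v = 1 by have := hd v; have := Finsupp.mem_support_iff.1 hv; omega, one_mul]
  rw [encodeMonomial, hbits, Finsupp.sum_fintype _ _ fun _ => rfl]

theorem sum_encodeMonomial_eq_iff {ι : Type*} [Fintype ι] {n : ℕ} (f : ι → Fin n →₀ ℕ)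
    (hf : ∀ i v, f i v ≤ 1) :
    ∑ i, encodeMonomial (f i) = Finsupp.single 0 (2 ^ n - 1) + Finsupp.single 1 n ↔
      ∑ i, f i = ∑ v, Finsupp.single v 1 := by
  simp only [encodeMonomial_of_le_one (hf _), sum_add_distrib, ← Finsupp.single_finsetSum,
    Finsupp.single_zero_add_single_one_inj, Finsupp.eq_sum_single_one_iff, Finsupp.finsetSum_apply]
  rw [sum_comm (f := fun i v => f i v * _), sum_comm (f := fun i v => f i v)]
  simp only [← sum_mul]
  exact sum_mul_two_pow_eq_and_sum_eq_iff _

/-- Encoding multilinear monomials by characteristic vectors: the product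
T₁⋯T_k contains the monomial x₁⋯x_n iff the product of the encoded bivariate
polynomials Q₁⋯Q_k contains the monomial yⁿ x^(2ⁿ−1). -/
theorem multilinear_monomial_iff_encoded (n k : ℕ)
    (T : Fin k → MvPolynomial (Fin n) ℕ)
    (hml : ∀ i, ∀ d ∈ (T i).support, ∀ v, d v ≤ 1)
    (Q : Fin k → MvPolynomial (Fin 2) ℕ)
    (hQ : ∀ i, Q i =
      ∑ d ∈ (T i).support,
        MvPolynomial.monomial
          (Finsupp.single (0 : Fin 2) (∑ v ∈ d.support, 2 ^ (v : ℕ)) +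
            Finsupp.single (1 : Fin 2) (d.sum fun _ e => e))
          ((T i).coeff d)) :
    0 < (∏ i, T i).coeff (∑ v : Fin n, Finsupp.single v 1) ↔
      0 < (∏ i, Q i).coeff
            (Finsupp.single (0 : Fin 2) (2 ^ n - 1) +
              Finsupp.single (1 : Fin 2) n) := by
  have hQ_support (i : Fin k) (e : Fin 2 →₀ ℕ) :
      e ∈ (Q i).support ↔ ∃ d ∈ (T i).support, encodeMonomial d = e := by
    rw [hQ i]
    exact mem_support_sum_monomial_iff (T i) encodeMonomial e
  simp only [pos_iff_ne_zero, coeff_prod_ne_zero_iff, hQ_support]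
  constructor
  · rintro ⟨f, hf, hsum⟩
    exact ⟨fun i => encodeMonomial (f i), fun i => ⟨f i, hf i, rfl⟩,
      (sum_encodeMonomial_eq_iff f fun i => hml i _ (hf i)).2 hsum⟩
  · rintro ⟨g, hg, hsum⟩
    choose f hf hfg using hg
    refine ⟨f, hf, (sum_encodeMonomial_eq_iff f fun i => hml i _ (hf i)).1 ?_⟩
    simpa only [hfg] using hsum
end

section
/- Let q ≥ 2, let E ∈ {0,1}^{p×q} and M ∈ ℤ≥0^{p×q} both be row-normalized (i.e., rowcode ≥ 0 for every row). If colweight(M,0) = colweight(E,0), weight(M) = weight(E), rowsum(M) = rowsum(E), and code(M) = code(E), then M = E. -/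
/-!
Among all representations `n = ∑ bⁱ aᵢ` with `aᵢ ∈ ℕ`, the base-`b` digits are the unique one of
least digit sum: a carry of `t` out of position `i` costs `b t` there and saves at most `t` above.
The rowcodes of `E` are base-`(2^q - 1)` digits, so `code` and `rowsum` force `M` to have the same
rowcodes. Since `rowcode N ≡ N 0 (mod 2)` and `E` is 0/1, column 0 of `M` dominates that of `E`,
hence equals it by `colweight`. Each row of `M` then has the same binary value as the row of `E`,
and minimality in base 2 together with `weight` forces equal rows.
-/

open Finset

section Digits

variable {b : ℕ}

lemma sum_fin_succ_pow_mul {n : ℕ} (a : Fin (n + 1) → ℕ) :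
    ∑ i : Fin (n + 1), b ^ (i : ℕ) * a i = a 0 + b * ∑ i : Fin n, b ^ (i : ℕ) * a i.succ := by
  simp only [Fin.sum_univ_succ, Fin.val_zero, pow_zero, one_mul, Fin.val_succ, mul_sum, pow_succ]
  congr 1
  exact sum_congr rfl fun i _ => by ring

lemma sum_pow_mul_lt_pow {n : ℕ} {a : Fin n → ℕ} (ha : ∀ i, a i < b) :
    ∑ i : Fin n, b ^ (i : ℕ) * a i < b ^ n := by
  induction n with
  | zero => simp
  | succ n ih =>
    rw [sum_fin_succ_pow_mul, pow_succ']
    have hrest := ih fun i => ha i.succ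
    have h0 := ha 0
    nlinarith

lemma exists_carry_of_add_mul_eq {x y X Y : ℕ} (hy : y < b) (h : x + b * X = y + b * Y) :
    ∃ t, x = y + b * t ∧ t + X = Y := by
  have hmod : x % b = y := by
    have := congrArg (· % b) h
    simpa [Nat.add_mul_mod_self_left, Nat.mod_eq_of_lt hy] using this
  refine ⟨x / b, by rw [← hmod, Nat.mod_add_div], ?_⟩
  have hx : x = y + b * (x / b) := by rw [← hmod, Nat.mod_add_div]
  apply Nat.eq_of_mul_eq_mul_left (by omega : 0 < b)
  linarith

lemma sum_le_add_sum_of_add_sum_pow_mul_eq {n : ℕ} {a d : Fin n → ℕ} {c : ℕ}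
    (hd : ∀ i, d i < b) (h : c + ∑ i : Fin n, b ^ (i : ℕ) * a i = ∑ i : Fin n, b ^ (i : ℕ) * d i) :
    ∑ i, d i ≤ c + ∑ i, a i := by
  induction n generalizing c with
  | zero => simp
  | succ n ih =>
    rw [sum_fin_succ_pow_mul, sum_fin_succ_pow_mul, ← add_assoc] at h
    obtain ⟨t, hc, ht⟩ := exists_carry_of_add_mul_eq (hd 0) h
    have hrest := ih (fun i => hd i.succ) ht
    rw [Fin.sum_univ_succ, Fin.sum_univ_succ]
    have : t ≤ b * t := Nat.le_mul_of_pos_left t (by have := hd 0; omega)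
    omega

lemma eq_of_sum_pow_mul_eq_of_sum_le (hb : 2 ≤ b) {n : ℕ} {a d : Fin n → ℕ}
    (hd : ∀ i, d i < b) (h : ∑ i : Fin n, b ^ (i : ℕ) * a i = ∑ i : Fin n, b ^ (i : ℕ) * d i)
    (hs : ∑ i, a i ≤ ∑ i, d i) : a = d := by
  induction n with
  | zero => exact funext fun i => i.elim0
  | succ n ih =>
    rw [sum_fin_succ_pow_mul, sum_fin_succ_pow_mul] at h
    rw [Fin.sum_univ_succ, Fin.sum_univ_succ] at hs
    obtain ⟨t, h0, ht⟩ := exists_carry_of_add_mul_eq (hd 0) h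
    have hrest := sum_le_add_sum_of_add_sum_pow_mul_eq (fun i => hd i.succ) ht
    have ht0 : t = 0 := by nlinarith
    subst ht0
    have htail := ih (a := fun i => a i.succ) (d := fun i => d i.succ) (fun i => hd i.succ)
      (by simpa using ht) (by omega)
    rw [← Fin.cons_self_tail a, ← Fin.cons_self_tail d]
    exact congrArg₂ _ (by simpa using h0) htail

end Digits

section Rowcode

variable {q : ℕ}

/-- Natural-number rowcode `-N 0 + ∑_{j ≥ 1} 2^j N j`; the subtraction truncates, so this is the
paper's rowcode only on row-normalized rows (`cast_rowcode`). -/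
def rowcode (N : Fin (q + 1) → ℕ) : ℕ := ∑ j : Fin (q + 1), 2 ^ (j : ℕ) * N j - 2 * N 0

lemma cast_rowcode {N : Fin (q + 1) → ℕ} (hN : 2 * N 0 ≤ ∑ j : Fin (q + 1), 2 ^ (j : ℕ) * N j) :
    (rowcode N : ℤ) = ∑ j : Fin (q + 1), 2 ^ (j : ℕ) * (N j : ℤ) - 2 * N 0 := by
  rw [rowcode, Nat.cast_sub hN]
  push_cast
  rfl

lemma rowcode_lt_of_le_one {N : Fin (q + 1) → ℕ} (hN : ∀ j, N j ≤ 1) :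
    rowcode N < 2 ^ (q + 1) - 1 := by
  have hhigh := sum_pow_mul_lt_pow (b := 2) (a := fun j : Fin q => N j.succ) fun j => by
    have := hN j.succ; omega
  rw [rowcode, sum_fin_succ_pow_mul, pow_succ]
  omega

lemma le_of_rowcode_eq {M E : Fin (q + 1) → ℕ} (hE : E 0 ≤ 1)
    (hM : 2 * M 0 ≤ ∑ j : Fin (q + 1), 2 ^ (j : ℕ) * M j)
    (hE' : 2 * E 0 ≤ ∑ j : Fin (q + 1), 2 ^ (j : ℕ) * E j)
    (h : rowcode M = rowcode E) : E 0 ≤ M 0 := by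
  rw [rowcode, rowcode, sum_fin_succ_pow_mul, sum_fin_succ_pow_mul] at h
  rw [sum_fin_succ_pow_mul] at hM hE'
  omega

end Rowcode

/-- Lemma (coding): if E is a row-normalized 0/1 matrix and M a row-normalized
nonnegative-integer matrix (q ≥ 2) with equal colweight of column 0, equal weight,
equal rowsum and equal code, then M = E. -/
theorem coding_lemma (p q : ℕ) (hq : 2 ≤ q)
    (E M : Fin p → Fin q → ℕ)
    (h01 : ∀ i j, E i j ≤ 1)
    (hnormE : ∀ i : Fin p,
      0 ≤ (∑ j : Fin q, 2 ^ (j : ℕ) * (E i j : ℤ)) - 2 * (E i ⟨0, by omega⟩ : ℤ))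
    (hnormM : ∀ i : Fin p,
      0 ≤ (∑ j : Fin q, 2 ^ (j : ℕ) * (M i j : ℤ)) - 2 * (M i ⟨0, by omega⟩ : ℤ))
    (hcol : ∑ i : Fin p, M i ⟨0, by omega⟩ = ∑ i : Fin p, E i ⟨0, by omega⟩)
    (hweight : ∑ i : Fin p, ∑ j : Fin q, M i j = ∑ i : Fin p, ∑ j : Fin q, E i j)
    (hrowsum :
      (∑ i : Fin p, ((∑ j : Fin q, 2 ^ (j : ℕ) * (M i j : ℤ)) -
          2 * (M i ⟨0, by omega⟩ : ℤ))) =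
      ∑ i : Fin p, ((∑ j : Fin q, 2 ^ (j : ℕ) * (E i j : ℤ)) -
          2 * (E i ⟨0, by omega⟩ : ℤ)))
    (hcode :
      (∑ i : Fin p, (2 ^ q - 1 : ℤ) ^ (i : ℕ) *
          ((∑ j : Fin q, 2 ^ (j : ℕ) * (M i j : ℤ)) - 2 * (M i ⟨0, by omega⟩ : ℤ))) =
      ∑ i : Fin p, (2 ^ q - 1 : ℤ) ^ (i : ℕ) *
          ((∑ j : Fin q, 2 ^ (j : ℕ) * (E i j : ℤ)) - 2 * (E i ⟨0, by omega⟩ : ℤ))) :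
    M = E := by
  obtain ⟨q, rfl⟩ : ∃ q', q = q' + 1 := ⟨q - 1, by omega⟩
  simp only [Fin.mk_zero] at hnormE hnormM hcol hrowsum hcode
  have normM i : 2 * M i 0 ≤ ∑ j : Fin (q + 1), 2 ^ (j : ℕ) * M i j := by
    exact_mod_cast sub_nonneg.mp (hnormM i)
  have normE i : 2 * E i 0 ≤ ∑ j : Fin (q + 1), 2 ^ (j : ℕ) * E i j := by
    exact_mod_cast sub_nonneg.mp (hnormE i)
  simp only [← fun i => cast_rowcode (normM i), ← fun i => cast_rowcode (normE i)] at hrowsum hcode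
  have hbase : ((2 ^ (q + 1) - 1 : ℕ) : ℤ) = 2 ^ (q + 1) - 1 := by
    push_cast [Nat.one_le_two_pow]; rfl
  have hrow : (fun i => rowcode (M i)) = fun i => rowcode (E i) := by
    refine eq_of_sum_pow_mul_eq_of_sum_le (b := 2 ^ (q + 1) - 1) ?_
      (fun i => rowcode_lt_of_le_one (h01 i)) ?_ (by exact_mod_cast hrowsum.le)
    · have := Nat.pow_le_pow_right two_pos (by omega : 2 ≤ q + 1); omega
    · rw [← hbase] at hcode; exact_mod_cast hcode
  have hcol0 i : M i 0 = E i 0 :=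
    ((sum_eq_sum_iff_of_le fun i _ => le_of_rowcode_eq (h01 i 0) (normM i) (normE i)
      (congrFun hrow i)).mp hcol.symm i (mem_univ i)).symm
  have hval i :
      ∑ j : Fin (q + 1), 2 ^ (j : ℕ) * M i j = ∑ j : Fin (q + 1), 2 ^ (j : ℕ) * E i j := by
    have hr := congrFun hrow i
    simp only [rowcode] at hr
    have := normM i
    have := normE i
    have := hcol0 i
    omega
  have hE_digit i j : E i j < 2 := Nat.lt_succ_of_le (h01 i j)
  have hwt_le i : ∑ j, E i j ≤ ∑ j, M i j := by
    simpa using sum_le_add_sum_of_add_sum_pow_mul_eq (c := 0) (hE_digit i) (by simpa using hval i)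
  have hwt i : ∑ j, M i j = ∑ j, E i j :=
    ((sum_eq_sum_iff_of_le fun i _ => hwt_le i).mp hweight.symm i (mem_univ i)).symm
  funext i
  exact eq_of_sum_pow_mul_eq_of_sum_le le_rfl (hE_digit i) (hval i) (hwt i).le
end

section
/- Let b > 1 and suppose X = Σ_i x_i b^i with x_i ∈ ℤ≥0 finitely supported and Σ_i x_i equal to the base-b digit sum of X. Then x_i < b for all i, i.e., (x_i) is the standard base-b representation of X. -/
/-!
The base-`b` digit sum `S` is subadditive — by Legendre's formula
`n - S n = (b - 1) * ∑ k, n / b ^ (k + 1)` and superadditivity of `· / b ^ (k + 1)` — and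
`S (c * b ^ i) = S c`. Hence `S X ≤ ∑ S (x i) ≤ ∑ x i`, and the last inequality is strict as soon
as some `x i ≥ b`, because then `S (x i) < x i`.
-/

open Finset

namespace Nat

variable {b : ℕ}

theorem sub_one_mul_sum_div_pow_eq_sub_sum_digits_of_log_lt (hb : 1 < b) {n K : ℕ}
    (hK : log b n < K) :
    (b - 1) * ∑ i ∈ range K, n / b ^ (i + 1) = n - (b.digits n).sum := by
  rw [← sub_one_mul_sum_log_div_pow_eq_sub_sum_digits, eq_comm]
  congr 1
  refine sum_subset (range_subset_range.mpr hK) fun i hiK hilog => ?_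
  have hi : log b n < i := by simpa using hilog
  exact div_eq_of_lt ((lt_pow_succ_log_self hb n).trans_le (pow_le_pow_right₀ hb.le (by omega)))

theorem digits_sum_add_le (hb : 1 < b) (m n : ℕ) :
    (b.digits (m + n)).sum ≤ (b.digits m).sum + (b.digits n).sum := by
  have hlegendre (k : ℕ) (hk : k ≤ m + n) := sub_one_mul_sum_div_pow_eq_sub_sum_digits_of_log_lt hb
    (K := log b (m + n) + 1) (lt_succ_of_le (log_mono_right hk))
  have hcarry : ∑ i ∈ range (log b (m + n) + 1), (m / b ^ (i + 1) + n / b ^ (i + 1))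
      ≤ ∑ i ∈ range (log b (m + n) + 1), (m + n) / b ^ (i + 1) :=
    sum_le_sum fun i _ => div_add_div_le_add_div
  rw [sum_add_distrib, ← Nat.mul_le_mul_left_iff (k := b - 1) (by omega), mul_add,
    hlegendre m (by omega), hlegendre n (by omega), hlegendre (m + n) le_rfl] at hcarry
  have := digit_sum_le b m
  have := digit_sum_le b n
  have := digit_sum_le b (m + n)
  omega

theorem digits_sum_mul_pow (hb : 1 < b) (c i : ℕ) :
    (b.digits (c * b ^ i)).sum = (b.digits c).sum := by
  rcases c.eq_zero_or_pos with rfl | hc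
  · simp
  · rw [mul_comm, digits_base_pow_mul hb hc, List.sum_append, List.sum_replicate, smul_zero,
      zero_add]

theorem digits_sum_lt_self (hb : 1 < b) {c : ℕ} (hc : b ≤ c) : (b.digits c).sum < c := by
  have hq : 0 < c / b := div_pos hc (by omega)
  have := digit_sum_le b (c / b)
  have := div_add_mod c b
  rw [digits_def' hb (by omega), List.sum_cons]
  nlinarith

end Nat

theorem digits_sum_le_finsupp_sum {b : ℕ} (hb : 1 < b) (x : ℕ →₀ ℕ) :
    (b.digits (x.sum fun i c => c * b ^ i)).sum ≤ x.sum fun _ c => (b.digits c).sum := by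
  refine (le_sum_of_subadditive (fun n => (b.digits n).sum) (by simp) (Nat.digits_sum_add_le hb)
    _ _).trans_eq ?_
  simp only [Nat.digits_sum_mul_pow hb]
  rfl

/-- Uniqueness: any finitely supported nonnegative expansion of X in base b whose
digit sum equals the standard base-b digit sum has all digits < b. -/
theorem expansion_of_min_digit_sum_is_standard (b : ℕ) (hb : 1 < b)
    (x : ℕ →₀ ℕ) (X : ℕ) (hX : (x.sum fun i c => c * b ^ i) = X)
    (hmin : (x.sum fun _ c => c) = (Nat.digits b X).sum) :
    ∀ i, x i < b := by
  subst hX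
  intro i
  by_contra! hi
  have hlt : (x.sum fun _ c => (b.digits c).sum) < x.sum fun _ c => c :=
    sum_lt_sum (fun j _ => Nat.digit_sum_le b (x j))
      ⟨i, Finsupp.mem_support_iff.mpr (by omega), Nat.digits_sum_lt_self hb hi⟩
  have := digits_sum_le_finsupp_sum hb x
  omega
end

section
/- Let b > 1 and x : ℕ → ℤ≥0 be finitely supported with some x_j ≥ b. Then the digit sum Σ_i x_i is strictly greater than the base-b digit sum of X = Σ_i x_i b^i. -/
/-! A carry replaces `b` units at position `i` by one unit at position `i + 1`, so it never
increases the digit sum. Hence the base-`b` digit sum of `∑ xᵢ bⁱ` is at most `∑ xᵢ`, and if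
`x j ≥ b`, trading `b` units at position `j` for one at position `j + 1` gives an expansion of
the same number whose coefficient sum is smaller by `b - 1 > 0`. -/

namespace Nat

theorem digits_sum_add_base_mul {b r : ℕ} (hb : 1 < b) (hr : r < b) (q : ℕ) :
    (b.digits (r + b * q)).sum = r + (b.digits q).sum := by
  rcases eq_or_ne r 0 with rfl | hr0
  · rcases eq_or_ne q 0 with rfl | hq0
    · simp
    · rw [digits_add b hb 0 q hr (Or.inr hq0), List.sum_cons]
  · rw [digits_add b hb r q hr (Or.inl hr0), List.sum_cons]

theorem digits_sum_eq_mod_add_div {b : ℕ} (hb : 1 < b) (n : ℕ) :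
    (b.digits n).sum = n % b + (b.digits (n / b)).sum := by
  conv_lhs => rw [← mod_add_div n b]
  exact digits_sum_add_base_mul hb (mod_lt n (by omega)) _

theorem digits_sum_succ_le {b : ℕ} (hb : 1 < b) (n : ℕ) :
    (b.digits (n + 1)).sum ≤ (b.digits n).sum + 1 := by
  induction n using Nat.strong_induction_on with
  | _ n ih =>
    rw [digits_sum_eq_mod_add_div hb n, digits_sum_eq_mod_add_div hb (n + 1)]
    by_cases hno_carry : n % b + 1 < b
    · have hmod : (n + 1) % b = n % b + 1 := by
        rw [add_mod, one_mod_eq_one.mpr hb.ne', mod_eq_of_lt hno_carry]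
      have hdiv : (n + 1) / b = n / b := by
        rw [succ_div_of_not_dvd (by rw [dvd_iff_mod_eq_zero, hmod]; omega)]
      rw [hmod, hdiv]
      omega
    · have hdvd : b ∣ n + 1 := by
        rw [dvd_iff_mod_eq_zero, add_mod, one_mod_eq_one.mpr hb.ne']
        have := mod_lt n (by omega : 0 < b)
        rw [show n % b + 1 = b by omega, mod_self]
      have hn : 0 < n := by
        have := mod_le n b
        omega
      rw [mod_eq_zero_of_dvd hdvd, succ_div_of_dvd hdvd]
      have := ih (n / b) (div_lt_self hn hb)
      omega

theorem digits_sum_add_base_pow_le {b : ℕ} (hb : 1 < b) (k n : ℕ) :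
    (b.digits (n + b ^ k)).sum ≤ (b.digits n).sum + 1 := by
  induction k generalizing n with
  | zero => simpa using digits_sum_succ_le hb n
  | succ k ih =>
    have hsplit : n + b ^ (k + 1) = n % b + b * (n / b + b ^ k) := by
      rw [pow_succ]; nth_rw 1 [← mod_add_div n b]; ring
    rw [hsplit, digits_sum_add_base_mul hb (mod_lt n (by omega)), digits_sum_eq_mod_add_div hb n]
    have := ih (n / b)
    omega

theorem digits_sum_add_mul_base_pow_le {b : ℕ} (hb : 1 < b) (k n c : ℕ) :
    (b.digits (n + c * b ^ k)).sum ≤ (b.digits n).sum + c := by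
  induction c with
  | zero => simp
  | succ c ih =>
    calc (b.digits (n + (c + 1) * b ^ k)).sum
        = (b.digits ((n + c * b ^ k) + b ^ k)).sum := by ring_nf
      _ ≤ (b.digits (n + c * b ^ k)).sum + 1 := digits_sum_add_base_pow_le hb k _
      _ ≤ (b.digits n).sum + c + 1 := by omega

end Nat

theorem Finsupp.digits_sum_le_sum {b : ℕ} (hb : 1 < b) (x : ℕ →₀ ℕ) :
    (b.digits (x.sum fun i c => c * b ^ i)).sum ≤ x.sum fun _ c => c := by
  induction x using Finsupp.induction with
  | zero => simp
  | single_add i c x _ _ ih =>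
    rw [sum_add_index' (by simp) (by intros; ring), sum_add_index' (by simp) (by intros; ring),
      sum_single_index (by simp), sum_single_index rfl, add_comm (c * b ^ i), add_comm c]
    exact (Nat.digits_sum_add_mul_base_pow_le hb i _ c).trans (by omega)

/-- If some digit of a finitely supported expansion is ≥ b, then the digit sum of
the expansion strictly exceeds the base-b digit sum of the represented number. -/
theorem digit_sum_strict_gt_of_nonstandard (b : ℕ) (hb : 1 < b)
    (x : ℕ →₀ ℕ) (j : ℕ) (hj : b ≤ x j) :
    (Nat.digits b (x.sum fun i c => c * b ^ i)).sum < x.sum fun _ c => c := by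
  obtain ⟨y, rfl⟩ := exists_add_of_le (Finsupp.single_le_iff.mpr hj)
  have hvalue : ((Finsupp.single j b + y).sum fun i c => c * b ^ i)
      = (y.sum fun i c => c * b ^ i) + 1 * b ^ (j + 1) := by
    rw [Finsupp.sum_add_index' (by simp) (by intros; ring), Finsupp.sum_single_index (by simp)]
    ring
  have hweight : ((Finsupp.single j b + y).sum fun _ c => c) = (y.sum fun _ c => c) + b := by
    rw [Finsupp.sum_add_index' (by simp) (by intros; ring), Finsupp.sum_single_index rfl,
      add_comm]
  rw [hvalue, hweight]
  calc (b.digits ((y.sum fun i c => c * b ^ i) + 1 * b ^ (j + 1))).sum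
      ≤ (b.digits (y.sum fun i c => c * b ^ i)).sum + 1 :=
        Nat.digits_sum_add_mul_base_pow_le hb (j + 1) _ 1
    _ ≤ (y.sum fun _ c => c) + 1 := by grw [Finsupp.digits_sum_le_sum hb y]
    _ < (y.sum fun _ c => c) + b := by omega
end

section
/- Let S₁,...,S_k ⊆ U be subsets of a finite set U of size n, and encode each S_i as the pair (|S_i|, b(S_i)) where b(S_i) = Σ_{u∈S_i} 2^{ι(u)} for an injection ι : U → {0,...,n−1}. Then Σ_i |S_i| = n and Σ_i b(S_i) = 2^n − 1 hold if and only if S₁,...,S_k is a partition of U (pairwise disjoint with union U). -/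
/-!
Counting each element `u ∈ U` with its multiplicity `c u = #{i | u ∈ Sᵢ}`, the two sums become
`∑ c u = n` and `∑ c u 2^{ι u} = 2ⁿ - 1`, and `S` is a partition exactly when `c ≡ 1` on `U`.
Writing `2ⁿ - 1` as a combination of `2⁰, …, 2ⁿ⁻¹` with coefficients summing to at most `n`
forces every coefficient to be `1`: the coefficient of `2⁰` is odd, and carrying its excess
`(c₀ - 1) / 2` into the coefficient of `2¹` strictly lowers the coefficient sum unless it is zero.
-/

open Finset

namespace Nat

theorem sum_range_two_pow (n : ℕ) : ∑ j ∈ range n, 2 ^ j = 2 ^ n - 1 := by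
  simpa using geomSum_eq le_rfl n

theorem sum_range_succ_mul_two_pow (c : ℕ → ℕ) (n : ℕ) :
    ∑ j ∈ range (n + 1), c j * 2 ^ j = c 0 + 2 * ∑ j ∈ range n, c (j + 1) * 2 ^ j := by
  rw [sum_range_succ', mul_sum, add_comm]
  simp only [pow_succ, pow_zero, mul_one]
  congr 1
  exact sum_congr rfl fun j _ => by ring

theorem eq_one_of_sum_mul_two_pow_eq_of_sum_le {n : ℕ} {c : ℕ → ℕ}
    (hval : ∑ j ∈ range n, c j * 2 ^ j = 2 ^ n - 1) (hsum : ∑ j ∈ range n, c j ≤ n) :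
    ∀ j < n, c j = 1 := by
  induction n generalizing c with
  | zero => simp
  | succ n ih =>
    set T := ∑ j ∈ range n, c (j + 1) * 2 ^ j
    set q := c 0 / 2
    rw [sum_range_succ_mul_two_pow] at hval
    rw [sum_range_succ'] at hsum
    have hpow : 2 ^ (n + 1) = 2 * 2 ^ n := _root_.pow_succ' 2 n
    have hpos : 1 ≤ 2 ^ n := Nat.one_le_two_pow
    have hc0 : c 0 = 2 * q + 1 := by omega
    have hTq : T + q = 2 ^ n - 1 := by omega
    have hcarry : (if 0 ∈ range n then q else 0) = q := by
      split_ifs with h0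
      · rfl
      · simp only [mem_range, Nat.not_lt, Nat.le_zero] at h0
        simp only [T, h0, range_zero, sum_empty, pow_zero, Nat.sub_self] at hTq
        omega
    set c' : ℕ → ℕ := fun j => c (j + 1) + if j = 0 then q else 0
    have hval' : ∑ j ∈ range n, c' j * 2 ^ j = 2 ^ n - 1 := by
      simp only [c', add_mul, sum_add_distrib, ite_mul, zero_mul, sum_ite_eq', pow_zero,
        mul_one, hcarry]
      omega
    have hsum' : ∑ j ∈ range n, c' j = ∑ j ∈ range n, c (j + 1) + q := by
      simp only [c', sum_add_distrib, sum_ite_eq', hcarry]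
    have hone := ih hval' (by omega)
    have hsum_one : ∑ j ∈ range n, c' j = n := by
      rw [sum_congr rfl fun j hj => hone j (mem_range.1 hj)]
      simp
    have hq : q = 0 := by omega
    rintro (_ | j) hj
    · omega
    · simpa [c', hq] using hone j (by omega)

end Nat

namespace Finset

variable {α κ : Type*}

theorem eq_one_of_sum_mul_two_pow_eq_of_sum_le {U : Finset α} {e : α → ℕ} {n : ℕ}
    (hinj : Set.InjOn e U) (himage : U.image e = range n) {c : α → ℕ}
    (hval : ∑ u ∈ U, c u * 2 ^ e u = 2 ^ n - 1) (hsum : ∑ u ∈ U, c u ≤ n) :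
    ∀ u ∈ U, c u = 1 := by
  intro u₀ hu₀
  have : Nonempty α := ⟨u₀⟩
  set d : ℕ → ℕ := c ∘ Function.invFunOn e U
  have hd : ∀ u ∈ U, d (e u) = c u := fun u hu =>
    congrArg c (hinj.leftInvOn_invFunOn hu)
  have hreindex (g : ℕ → ℕ) : ∑ u ∈ U, c u * g (e u) = ∑ j ∈ range n, d j * g j := by
    rw [← himage, sum_image hinj]
    exact sum_congr rfl fun u hu => by rw [hd u hu]
  have hsum_d : ∑ j ∈ range n, d j ≤ n := by
    have hcount := hreindex fun _ => 1
    simp only [mul_one] at hcount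
    exact hcount ▸ hsum
  have hone := Nat.eq_one_of_sum_mul_two_pow_eq_of_sum_le (c := d) (hreindex _ ▸ hval) hsum_d
  rw [← hd u₀ hu₀]
  exact hone _ (mem_range.1 (himage ▸ mem_image_of_mem e hu₀))

variable [Fintype κ] [DecidableEq α]

theorem sum_sum_eq_sum_card_filter_mem_smul {M : Type*} [AddCommMonoid M]
    (U : Finset α) (S : κ → Finset α) (hsub : ∀ i, S i ⊆ U) (f : α → M) :
    ∑ i, ∑ u ∈ S i, f u = ∑ u ∈ U, #{i | u ∈ S i} • f u := by
  rw [sum_comm' (t' := U) (s' := fun u => {i | u ∈ S i})]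
  · exact sum_congr rfl fun u _ => sum_const _
  · intro i u
    simp only [mem_univ, true_and, mem_filter]
    exact ⟨fun h => ⟨h, hsub i h⟩, And.left⟩

theorem pairwiseDisjoint_and_biUnion_eq_iff_card_filter_mem_eq_one
    (U : Finset α) (S : κ → Finset α) (hsub : ∀ i, S i ⊆ U) :
    ((∀ i j, i ≠ j → Disjoint (S i) (S j)) ∧ univ.biUnion S = U) ↔
      ∀ u ∈ U, #{i | u ∈ S i} = 1 := by
  simp only [card_eq_one_iff_existsUnique, mem_filter, mem_univ, true_and]
  constructor
  · rintro ⟨hdisj, hcover⟩ u hu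
    obtain ⟨i, -, hi⟩ := mem_biUnion.1 (hcover ▸ hu)
    refine ⟨i, hi, fun j hj => ?_⟩
    by_contra hji
    exact disjoint_left.1 (hdisj j i hji) hj hi
  · intro hunique
    refine ⟨fun i j hij => disjoint_left.2 fun u hi hj => hij ?_, ?_⟩
    · exact (hunique u (hsub i hi)).unique hi hj
    · refine Subset.antisymm (biUnion_subset.2 fun i _ => hsub i) fun u hu => ?_
      obtain ⟨i, hi, -⟩ := hunique u hu
      exact mem_biUnion.2 ⟨i, mem_univ i, hi⟩

end Finset

open Finset

/-- Encoding subsets of an n-element set U via an injection ι : U → {0,…,n−1}: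
Σ|Sᵢ| = n and Σ b(Sᵢ) = 2ⁿ − 1 hold iff S₁,…,S_k is a partition of U. -/
theorem subset_encoding_partition {α : Type*} [DecidableEq α]
    (U : Finset α) (n k : ℕ) (hU : U.card = n)
    (ι : α → ℕ) (hιlt : ∀ u ∈ U, ι u < n)
    (hιinj : ∀ u ∈ U, ∀ v ∈ U, ι u = ι v → u = v)
    (S : Fin k → Finset α) (hsub : ∀ i, S i ⊆ U) :
    ((∑ i, (S i).card = n) ∧ (∑ i, ∑ u ∈ S i, 2 ^ ι u = 2 ^ n - 1)) ↔
      ((∀ i j, i ≠ j → Disjoint (S i) (S j)) ∧ Finset.univ.biUnion S = U) := by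
  have hinj : Set.InjOn ι U := fun u hu v hv => hιinj u hu v hv
  have himage : U.image ι = range n :=
    eq_of_subset_of_card_le (image_subset_iff.2 fun u hu => mem_range.2 (hιlt u hu))
      (by rw [card_range, card_image_of_injOn hinj, hU])
  have hcard : ∑ i, #(S i) = ∑ u ∈ U, #{i | u ∈ S i} := calc
    _ = ∑ i, ∑ u ∈ S i, 1 := by simp only [card_eq_sum_ones]
    _ = ∑ u ∈ U, #{i | u ∈ S i} • 1 := sum_sum_eq_sum_card_filter_mem_smul U S hsub _
    _ = _ := by simp only [smul_eq_mul, mul_one]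
  have hval : ∑ i, ∑ u ∈ S i, 2 ^ ι u = ∑ u ∈ U, #{i | u ∈ S i} * 2 ^ ι u :=
    sum_sum_eq_sum_card_filter_mem_smul U S hsub _
  rw [pairwiseDisjoint_and_biUnion_eq_iff_card_filter_mem_eq_one U S hsub, hcard, hval]
  refine ⟨fun ⟨hsum, hpow⟩ => eq_one_of_sum_mul_two_pow_eq_of_sum_le hinj himage hpow hsum.le,
    fun hone => ⟨?_, ?_⟩⟩
  · rw [sum_congr rfl hone, sum_const, smul_eq_mul, mul_one, hU]
  · rw [sum_congr rfl fun u hu => by rw [hone u hu, one_mul], ← Nat.sum_range_two_pow, ← himage,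
      sum_image hinj]
end
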